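/- arXiv:2501.01780 — 9 statements merged into one kernel-verified Lean document; each statement's English description precedes it below -/
import Mathlib

section
/- Let Λ ⊂ ℤ³ be the lattice of integer triples with even coordinate sum. If 0 ≤ x, y ≤ 1/2, then the maximum over z ∈ ℝ of the ℓ¹-distance from (x,y,z) to Λ equals 1 + min(x, y). -/
noncomputable def l1dist (v w : ℝ × ℝ × ℝ) : ℝ :=
  |v.1 - w.1| + |v.2.1 - w.2.1| + |v.2.2 - w.2.2|

noncomputable def distLambda (v : ℝ × ℝ × ℝ) : ℝ :=
  sInf { d | ∃ a b c : ℤ, Even (a + b + c) ∧ d = l1dist v ((a : ℝ), (b : ℝ), (c : ℝ)) }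

lemma lambdaSet_nonempty (v : ℝ × ℝ × ℝ) :
    { d | ∃ a b c : ℤ, Even (a + b + c) ∧ d = l1dist v ((a : ℝ), (b : ℝ), (c : ℝ)) }.Nonempty :=
  ⟨l1dist v ((0:ℤ), (0:ℤ), (0:ℤ)), 0, 0, 0, ⟨0, by ring⟩, rfl⟩

lemma lambdaSet_bddBelow (v : ℝ × ℝ × ℝ) :
    BddBelow { d | ∃ a b c : ℤ, Even (a + b + c) ∧ d = l1dist v ((a : ℝ), (b : ℝ), (c : ℝ)) } := by
  refine ⟨0, ?_⟩
  rintro d ⟨a, b, c, _, rfl⟩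
  unfold l1dist
  positivity

lemma distLambda_le (v : ℝ × ℝ × ℝ) (a b c : ℤ) (h : Even (a + b + c)) :
    distLambda v ≤ l1dist v ((a : ℝ), (b : ℝ), (c : ℝ)) :=
  csInf_le (lambdaSet_bddBelow v) ⟨a, b, c, h, rfl⟩

lemma le_distLambda (v : ℝ × ℝ × ℝ) (r : ℝ)
    (h : ∀ a b c : ℤ, Even (a + b + c) → r ≤ l1dist v ((a : ℝ), (b : ℝ), (c : ℝ))) :
    r ≤ distLambda v := by
  refine le_csInf (lambdaSet_nonempty v) ?_
  rintro d ⟨a, b, c, he, rfl⟩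
  exact h a b c he

lemma key_abs (t : ℝ) (ht0 : 0 ≤ t) (k : ℤ) :
    t ≤ 1/2 → (t ≤ |t - k| ∧ (k ≠ 0 → 1 - t ≤ |t - k|)) := by
  intro ht
  rcases eq_or_ne k 0 with rfl | hk
  · simp [abs_of_nonneg ht0]
  · have h1 : (1 : ℝ) ≤ |(k : ℝ)| := by
      have := Int.one_le_abs hk
      calc (1:ℝ) = ((1:ℤ):ℝ) := by norm_num
        _ ≤ ((|k| : ℤ) : ℝ) := by exact_mod_cast this
        _ = |(k:ℝ)| := by push_cast; ring
    have h2 : |(k : ℝ)| - |t| ≤ |t - k| := by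
      have h := abs_sub_abs_le_abs_sub (k : ℝ) t
      rw [abs_sub_comm] at h
      linarith
    rw [abs_of_nonneg ht0] at h2
    have h3 : 1 - t ≤ |t - k| := by linarith
    exact ⟨by linarith, fun _ => h3⟩

lemma upper_bound (x y : ℝ) (hx0 : 0 ≤ x) (hx : x ≤ 1/2) (hy0 : 0 ≤ y) (hy : y ≤ 1/2)
    (z : ℝ) : distLambda (x, y, z) ≤ 1 + min x y := by
  obtain ⟨E, O, hE, hO, hEO⟩ : ∃ E O : ℤ, Even E ∧ Odd O ∧ |z - E| + |z - O| = 1 := by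
    set n : ℤ := ⌊z⌋ with hn
    have h1 : (n : ℝ) ≤ z := Int.floor_le z
    have h2 : z < (n : ℝ) + 1 := Int.lt_floor_add_one z
    have ha : |z - (n : ℝ)| = z - n := abs_of_nonneg (by linarith)
    have hb : |z - ((n + 1 : ℤ) : ℝ)| = (n : ℝ) + 1 - z := by
      rw [abs_of_nonpos (by push_cast; linarith)]; push_cast; ring
    rcases Int.even_or_odd n with he | ho
    · exact ⟨n, n + 1, he, he.add_one, by rw [ha, hb]; ring⟩
    · refine ⟨n + 1, n, ho.add_one, ho, by rw [ha, hb]; ring⟩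
  have hy1 : |y - ((1 : ℤ) : ℝ)| = 1 - y := by
    rw [abs_of_nonpos (by push_cast; linarith)]; push_cast; ring
  have hx1 : |x - ((1 : ℤ) : ℝ)| = 1 - x := by
    rw [abs_of_nonpos (by push_cast; linarith)]; push_cast; ring
  have d1 : distLambda (x, y, z) ≤ x + y + |z - (E : ℝ)| := by
    have h := distLambda_le (x, y, z) 0 0 E (by obtain ⟨k, hk⟩ := hE; exact ⟨k, by omega⟩)
    simp only [l1dist, Int.cast_zero, sub_zero] at h
    rwa [abs_of_nonneg hx0, abs_of_nonneg hy0] at h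
  have d2 : distLambda (x, y, z) ≤ x + (1 - y) + |z - (O : ℝ)| := by
    have h := distLambda_le (x, y, z) 0 1 O (by obtain ⟨k, hk⟩ := hO; exact ⟨k + 1, by omega⟩)
    simp only [l1dist, Int.cast_zero, sub_zero] at h
    rwa [abs_of_nonneg hx0, hy1] at h
  have d3 : distLambda (x, y, z) ≤ (1 - x) + y + |z - (O : ℝ)| := by
    have h := distLambda_le (x, y, z) 1 0 O (by obtain ⟨k, hk⟩ := hO; exact ⟨k + 1, by omega⟩)
    simp only [l1dist, Int.cast_zero, sub_zero] at h
    rwa [hx1, abs_of_nonneg hy0] at h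
  rcases le_total x y with h | h
  · rw [min_eq_left h]; linarith
  · rw [min_eq_right h]; linarith

lemma lower_bound (x y : ℝ) (hx0 : 0 ≤ x) (hx : x ≤ 1/2) (hy0 : 0 ≤ y) (hy : y ≤ 1/2) :
    1 + min x y ≤ distLambda (x, y, 1 + max x y) := by
  apply le_distLambda
  intro a b c he
  simp only [l1dist]
  have hM0 : 0 ≤ max x y := le_max_of_le_left hx0
  have hM : max x y ≤ 1/2 := max_le hx hy
  have hmM : min x y + max x y = x + y := min_add_max x y
  have hmx : min x y ≤ x := min_le_left x y
  have hmy : min x y ≤ y := min_le_right x y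
  have hMx : x ≤ max x y := le_max_left x y
  have hMy : y ≤ max x y := le_max_right x y
  have hrw : (1 : ℝ) + max x y - (c : ℝ) = max x y - ((c - 1 : ℤ) : ℝ) := by push_cast; ring
  rw [hrw]
  obtain ⟨hA1, hA2⟩ := key_abs x hx0 a hx
  obtain ⟨hB1, hB2⟩ := key_abs y hy0 b hy
  obtain ⟨hC1, hC2⟩ := key_abs (max x y) hM0 (c - 1) hM
  rcases eq_or_ne a 0 with rfl | ha <;> rcases eq_or_ne b 0 with rfl | hb <;>
    rcases eq_or_ne c 1 with rfl | hc
  · exfalso; obtain ⟨k, hk⟩ := he; omega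
  · have h3 := hC2 (by omega); linarith
  · have h2 := hB2 hb; linarith
  · have h2 := hB2 hb; have h3 := hC2 (by omega); linarith
  · have h1 := hA2 ha; linarith
  · have h1 := hA2 ha; have h3 := hC2 (by omega); linarith
  · have h1 := hA2 ha; have h2 := hB2 hb; linarith
  · have h1 := hA2 ha; have h2 := hB2 hb; have h3 := hC2 (by omega); linarith

theorem max_dist_eq (x y : ℝ) (hx0 : 0 ≤ x) (hx : x ≤ 1/2) (hy0 : 0 ≤ y) (hy : y ≤ 1/2) :
    sSup { d | ∃ z : ℝ, d = distLambda (x, y, z) } = 1 + min x y := by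
  have hub : ∀ z : ℝ, distLambda (x, y, z) ≤ 1 + min x y :=
    fun z => upper_bound x y hx0 hx hy0 hy z
  have hmem : distLambda (x, y, 1 + max x y) = 1 + min x y :=
    le_antisymm (hub _) (lower_bound x y hx0 hx hy0 hy)
  have hbdd : BddAbove { d | ∃ z : ℝ, d = distLambda (x, y, z) } := by
    refine ⟨1 + min x y, ?_⟩
    rintro d ⟨z, rfl⟩
    exact hub z
  apply le_antisymm
  · refine csSup_le ⟨distLambda (x, y, 0), ⟨0, rfl⟩⟩ ?_
    rintro d ⟨z, rfl⟩
    exact hub z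
  · rw [← hmem]
    exact le_csSup hbdd ⟨1 + max x y, rfl⟩
end

section
/- Let d be a positive integer and N a positive integer (not necessarily coprime to d). Then there exists an integer m such that 1 + d·m is coprime to N and |m - m_ℝ| ≤ J(N)/2 for any given real number m_ℝ, where J is the Jacobsthal function. -/
noncomputable def jacobsthal (n : ℕ) : ℕ :=
  sInf { J | 0 < J ∧ ∀ a d : ℤ, Int.gcd d n = 1 →
    ∃ k : ℕ, k < J ∧ Int.gcd (a + (k : ℤ) * d) n = 1 }

lemma jac_mem (N : ℕ) (hN : 0 < N) : jacobsthal N ∈ { J | 0 < J ∧ ∀ a d : ℤ, Int.gcd d N = 1 →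
    ∃ k : ℕ, k < J ∧ Int.gcd (a + (k : ℤ) * d) N = 1 } := by
  apply Nat.sInf_mem
  refine ⟨N, hN, fun a d hgcd => ?_⟩
  obtain ⟨u, v, huv⟩ := Int.isCoprime_iff_gcd_eq_one.mpr hgcd
  set k0 : ℤ := ((1 - a) * u) % N with hk0def
  have hNpos : (0:ℤ) < N := by exact_mod_cast hN
  have hk0nn : 0 ≤ k0 := Int.emod_nonneg _ (by positivity)
  have hk0lt : k0 < N := Int.emod_lt_of_pos _ hNpos
  refine ⟨k0.toNat, ?_, ?_⟩
  · exact_mod_cast (Int.toNat_lt' (by omega)).mpr (by exact_mod_cast hk0lt)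
  · rw [Int.toNat_of_nonneg hk0nn]
    obtain ⟨q, hq⟩ : (N:ℤ) ∣ (1 - a) * u - k0 :=
      ⟨((1 - a) * u) / N, by rw [hk0def, Int.emod_def]; ring⟩
    have key : a + k0 * d = 1 + (N:ℤ) * ((a-1)*v - q*d) := by
      linear_combination (-(d:ℤ)) * hq + (1 - a) * huv
    rw [key]
    exact Int.isCoprime_iff_gcd_eq_one.mp ((isCoprime_one_left).add_mul_left_left _)

lemma exists_coprime_part (d N : ℕ) (hd : 0 < d) (hN : 0 < N) :
    ∃ N' : ℕ, 0 < N' ∧ N' ∣ N ∧ Nat.Coprime N' d ∧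
      ∀ p : ℕ, p.Prime → p ∣ N → p ∣ d ∨ p ∣ N' := by
  set g := Nat.gcd N (d ^ N) with hg
  have hgdvd : g ∣ N := Nat.gcd_dvd_left _ _
  have hgpos : 0 < g := Nat.gcd_pos_of_pos_left _ hN
  refine ⟨N / g, Nat.div_pos (Nat.le_of_dvd hN hgdvd) hgpos, Nat.div_dvd_of_dvd hgdvd, ?_, ?_⟩
  all_goals
    have hfac : ∀ p : ℕ, (N / g).factorization p
        = N.factorization p - min (N.factorization p) (N * d.factorization p) := by
      intro p
      rw [Nat.factorization_div hgdvd, hg,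
        Nat.factorization_gcd hN.ne' (pow_pos hd N).ne', Nat.factorization_pow]
      simp
  · rw [Nat.coprime_iff_gcd_eq_one]
    by_contra hne
    set p := (Nat.gcd (N / g) d).minFac with hp
    have hpp : p.Prime := Nat.minFac_prime hne
    have hpN' : p ∣ N / g := hp ▸ (Nat.minFac_dvd _).trans (Nat.gcd_dvd_left _ _)
    have hpd : p ∣ d := hp ▸ (Nat.minFac_dvd _).trans (Nat.gcd_dvd_right _ _)
    have h1 : 1 ≤ d.factorization p :=
      (Nat.Prime.dvd_iff_one_le_factorization hpp hd.ne').mp hpd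
    have h2 : N.factorization p < N := Nat.factorization_lt p hN.ne'
    have h3 : min (N.factorization p) (N * d.factorization p) = N.factorization p := by
      apply min_eq_left; calc N.factorization p ≤ N := h2.le
        _ ≤ N * d.factorization p := Nat.le_mul_of_pos_right N h1
    have h4 : (N / g).factorization p = 0 := by rw [hfac, h3]; omega
    have h5 : 1 ≤ (N / g).factorization p :=
      (Nat.Prime.dvd_iff_one_le_factorization hpp
        (Nat.div_pos (Nat.le_of_dvd hN hgdvd) hgpos).ne').mp hpN'
    omega
  · intro p hpp hpN
    by_cases hpd : p ∣ d
    · exact Or.inl hpd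
    · right
      have h0 : d.factorization p = 0 := Nat.factorization_eq_zero_of_not_dvd hpd
      have h1 : 1 ≤ N.factorization p :=
        (Nat.Prime.dvd_iff_one_le_factorization hpp hN.ne').mp hpN
      refine (Nat.Prime.dvd_iff_one_le_factorization hpp
        (Nat.div_pos (Nat.le_of_dvd hN hgdvd) hgpos).ne').mpr ?_
      rw [hfac, h0]; simp; omega

theorem exists_coprime_near_one (mR : ℝ) (d N : ℕ) (hd : 0 < d) (hN : 0 < N) :
    ∃ m : ℤ, Int.gcd (1 + (d : ℤ) * m) N = 1 ∧
      |(m : ℝ) - mR| ≤ (jacobsthal N : ℝ) / 2 := by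
  obtain ⟨N', hN'pos, hN'dvd, hN'cop, hprop⟩ := exists_coprime_part d N hd hN
  obtain ⟨hJpos, hJ⟩ := jac_mem N hN
  set J := jacobsthal N with hJdef
  -- d + N' is coprime to N
  have hdN' : Nat.Coprime (d + N') N := by
    rw [Nat.coprime_iff_gcd_eq_one]
    by_contra hne
    set p := (Nat.gcd (d + N') N).minFac with hp
    have hpp : p.Prime := Nat.minFac_prime hne
    have hp1 : p ∣ d + N' := (Nat.minFac_dvd _).trans (Nat.gcd_dvd_left _ _)
    have hp2 : p ∣ N := (Nat.minFac_dvd _).trans (Nat.gcd_dvd_right _ _)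
    have hboth : p ∣ d ∧ p ∣ N' := by
      rcases hprop p hpp hp2 with h | h
      · refine ⟨h, ?_⟩
        have h2 : p ∣ (d + N') - d := Nat.dvd_sub hp1 h
        simpa using h2
      · refine ⟨?_, h⟩
        have h2 : p ∣ (d + N') - N' := Nat.dvd_sub hp1 h
        simpa using h2
    have : p ∣ Nat.gcd N' d := Nat.dvd_gcd hboth.2 hboth.1
    rw [hN'cop] at this
    exact hpp.one_lt.ne' (Nat.dvd_one.mp this)
  set m0 : ℤ := ⌈mR - (J:ℝ)/2⌉ with hm0
  have hgcd' : Int.gcd ((d:ℤ) + (N':ℤ)) N = 1 := by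
    have := hdN'
    rw [Nat.coprime_iff_gcd_eq_one] at this
    rw [← this]
    exact Int.gcd_natCast_natCast _ _
  obtain ⟨k, hkJ, hcop⟩ := hJ (1 + (d:ℤ) * m0) ((d:ℤ) + (N':ℤ)) hgcd'
  refine ⟨m0 + k, ?_, ?_⟩
  · -- coprimality
    set m : ℤ := m0 + k with hm
    have hzero : (1 + (d:ℤ) * m0) + (k:ℤ) * ((d:ℤ) + (N':ℤ))
        = (1 + (d:ℤ) * m) + (N':ℤ) * k := by rw [hm]; ring
    -- gcd with N' is 1
    have hstep1 : Int.gcd ((1 + (d:ℤ) * m) + (N':ℤ) * k) N' = 1 := by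
      rw [← hzero]
      have hdd : Int.gcd ((1 + (d:ℤ) * m0) + (k:ℤ) * ((d:ℤ) + (N':ℤ))) (N':ℤ)
          ∣ Int.gcd ((1 + (d:ℤ) * m0) + (k:ℤ) * ((d:ℤ) + (N':ℤ))) (N:ℤ) := by
        unfold Int.gcd
        simp only [Int.natAbs_natCast]
        exact Nat.dvd_gcd (Nat.gcd_dvd_left _ _) ((Nat.gcd_dvd_right _ _).trans hN'dvd)
      rw [hcop] at hdd
      exact Nat.dvd_one.mp hdd
    have hstep2 : IsCoprime (1 + (d:ℤ) * m) (N':ℤ) :=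
      (Int.isCoprime_iff_gcd_eq_one.mpr hstep1).of_add_mul_left_left
    -- now upgrade to N
    by_contra hne
    set p := (Int.gcd (1 + (d:ℤ) * m) N).minFac with hp
    have hpp : p.Prime := Nat.minFac_prime hne
    have hpg : p ∣ Int.gcd (1 + (d:ℤ) * m) N := Nat.minFac_dvd _
    have hpZ : (p:ℤ) ∣ 1 + (d:ℤ) * m :=
      dvd_trans (by exact_mod_cast hpg) (Int.gcd_dvd_left ..)
    have hpN : p ∣ N := by
      have := dvd_trans (Int.natCast_dvd_natCast.mpr hpg) (Int.gcd_dvd_right ..)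
      exact_mod_cast this
    rcases hprop p hpp hpN with h | h
    · have : (p:ℤ) ∣ 1 := by
        have hdm : (p:ℤ) ∣ (d:ℤ) * m := Dvd.dvd.mul_right (by exact_mod_cast h) m
        have := dvd_sub hpZ hdm
        simpa using this
      have hp1' : p ∣ 1 := by exact_mod_cast this
      exact hpp.one_lt.ne' (Nat.dvd_one.mp hp1')
    · have hpn : p ∣ (1 + (d:ℤ) * m).natAbs := by
        have h2 := Int.natAbs_dvd_natAbs.mpr hpZ
        simpa using h2
      have hfin : p ∣ Int.gcd (1 + (d:ℤ) * m) (N':ℤ) := by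
        unfold Int.gcd
        simp only [Int.natAbs_natCast]
        exact Nat.dvd_gcd hpn h
      rw [Int.isCoprime_iff_gcd_eq_one.mp hstep2] at hfin
      exact hpp.one_lt.ne' (Nat.dvd_one.mp hfin)
  · -- distance bound
    have h1 : (mR - (J:ℝ)/2) ≤ (m0:ℝ) := Int.le_ceil _
    have h2 : (m0:ℝ) < mR - (J:ℝ)/2 + 1 := Int.ceil_lt_add_one _
    have h3 : (k:ℝ) + 1 ≤ (J:ℝ) := by exact_mod_cast hkJ
    rw [abs_le]
    constructor <;> push_cast <;> linarith
end

section
/- Let a, b, c be integers with no common factor and c ≠ 0, and let H ⊂ ℝ³/ℤ³ be the subgroup {(x,y,z) : ax + by + cz ∈ ℤ}. Then the map π: (ℝ/ℤ)² → ℝ³/ℤ³ given by (s,t) ↦ (cs, ct, -as - bt) is a surjection onto H. -/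
/-- The map (s,t) ↦ (cs, ct, -as-bt) surjects onto the subgroup
H = {(x,y,z) : ax + by + cz ∈ ℤ} of the torus ℝ³/ℤ³, stated via lifts. -/
theorem pi_surjects_onto_H (a b c : ℤ) (hc : c ≠ 0)
    (hgcd : Int.gcd (Int.gcd a b) c = 1) :
    -- the image lies in H
    (∀ s t : ℝ, ∃ n : ℤ,
      (a : ℝ) * ((c : ℝ) * s) + (b : ℝ) * ((c : ℝ) * t) +
        (c : ℝ) * (-(a : ℝ) * s - (b : ℝ) * t) = n) ∧
    -- every point of H is in the image, modulo ℤ³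
    (∀ x y z : ℝ, (∃ n : ℤ, (a : ℝ) * x + (b : ℝ) * y + (c : ℝ) * z = n) →
      ∃ s t : ℝ, ∃ m₁ m₂ m₃ : ℤ,
        (c : ℝ) * s = x + m₁ ∧ (c : ℝ) * t = y + m₂ ∧
        -(a : ℝ) * s - (b : ℝ) * t = z + m₃) := by
  constructor
  · intro s t
    exact ⟨0, by push_cast; ring⟩
  · intro x y z ⟨n, hn⟩
    -- Bezout: ∃ u v w, a*u + b*v + c*w = 1
    have hab : (Int.gcd a b : ℤ) = a * Int.gcdA a b + b * Int.gcdB a b :=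
      Int.gcd_eq_gcd_ab a b
    have hgc : (1 : ℤ) = (Int.gcd a b : ℤ) * Int.gcdA (Int.gcd a b) c
        + c * Int.gcdB (Int.gcd a b) c := by
      rw [← Int.gcd_eq_gcd_ab]; exact_mod_cast hgcd.symm
    set p := Int.gcdA (Int.gcd a b) c
    set u := Int.gcdA a b * p
    set v := Int.gcdB a b * p
    set w := Int.gcdB (Int.gcd a b) c
    have hbez : a * u + b * v + c * w = 1 := by
      have : (Int.gcd a b : ℤ) * p = (a * Int.gcdA a b + b * Int.gcdB a b) * p := by
        rw [← hab]
      simp only [u, v, w]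
      linarith [hgc, this]
    have hcR : (c : ℝ) ≠ 0 := Int.cast_ne_zero.mpr hc
    refine ⟨(x + (-n * u : ℤ)) / c, (y + (-n * v : ℤ)) / c, -n * u, -n * v, -n * w,
      by field_simp, by field_simp, ?_⟩
    have hb : (a : ℝ) * u + (b : ℝ) * v + (c : ℝ) * w = 1 := by exact_mod_cast hbez
    have key : (a : ℝ) * (x + ((-n * u : ℤ) : ℝ)) + (b : ℝ) * (y + ((-n * v : ℤ) : ℝ))
        = (c : ℝ) * (-z + (-((-n * w : ℤ) : ℝ))) := by
      push_cast
      linear_combination hn - (n : ℝ) * hb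
    field_simp
    push_cast at key ⊢
    linear_combination (-1 : ℝ) * key
end

section
/- If p, q, r are odd integers each at least 6, then there exists an integer k coprime to 2pqr such that the ℓ¹-distance from (k/p, k/q, k/r) to the lattice Λ = {(a,b,c) ∈ ℤ³ : a+b+c even} is at least 1. -/
lemma half_bound (j : ℤ) : (1/2 : ℝ) ≤ |(j : ℝ) + 1/2| := by
  rcases le_or_gt 0 j with h | h
  · have : (0:ℝ) ≤ (j:ℝ) := by exact_mod_cast h
    rw [abs_of_nonneg (by linarith)]; linarith
  · have hj : j ≤ -1 := by linarith
    have : (j:ℝ) ≤ -1 := by exact_mod_cast hj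
    rw [abs_of_nonpos (by linarith)]; linarith

lemma coord_bound (k p u s a : ℤ) (hs : s = 1 ∨ s = -1) (hp6 : 6 ≤ p)
    (hu : Odd u) (hk : 2*k = p*u + s) : (5/12 : ℝ) ≤ |(k:ℝ)/p - a| := by
  obtain ⟨t, ht⟩ := hu
  have hp0 : (0:ℝ) < (p:ℝ) := by exact_mod_cast (by linarith : (0:ℤ) < p)
  have hp6' : (6:ℝ) ≤ (p:ℝ) := by exact_mod_cast hp6
  have hkr : (2:ℝ)*(k:ℝ) = (p:ℝ)*(u:ℝ) + (s:ℝ) := by exact_mod_cast hk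
  have hur : (u:ℝ) = 2*(t:ℝ) + 1 := by exact_mod_cast ht
  have h2k : (2:ℝ)*k = 2*(p:ℝ)*t + p + s := by rw [hkr, hur]; ring
  have key : (k:ℝ)/p - a = (((t - a : ℤ):ℝ) + 1/2) + (s:ℝ)/(2*p) := by
    push_cast
    field_simp
    linear_combination h2k
  have hs1 : |(s:ℝ)| = 1 := by rcases hs with h | h <;> simp [h]
  have hsp : |(s:ℝ)/(2*p)| ≤ 1/12 := by
    rw [abs_div, hs1, abs_of_pos (by linarith)]
    rw [div_le_div_iff₀ (by linarith) (by norm_num)]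
    linarith
  have h1 := half_bound (t - a)
  have h2 : |((t - a : ℤ):ℝ) + 1/2| ≤ |(k:ℝ)/p - a| + |(s:ℝ)/(2*p)| := by
    calc |((t - a : ℤ):ℝ) + 1/2| = |((k:ℝ)/p - a) - (s:ℝ)/(2*p)| := by rw [key]; ring_nf
    _ ≤ |(k:ℝ)/p - a| + |(s:ℝ)/(2*p)| := abs_sub _ _
  linarith

theorem odd_case (p q r : ℤ) (hp : Odd p) (hq : Odd q) (hr : Odd r)
    (hp6 : 6 ≤ p) (hq6 : 6 ≤ q) (hr6 : 6 ≤ r) :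
    ∃ k : ℤ, Int.gcd k (2 * p * q * r) = 1 ∧
      1 ≤ distLambda ((k : ℝ) / p, (k : ℝ) / q, (k : ℝ) / r) := by
  obtain ⟨m, hm⟩ := (hp.mul hq).mul hr
  -- hm : p * q * r = 2 * m + 1
  have key : ∀ k s : ℤ, (s = 1 ∨ s = -1) → 2*k = p*q*r + s → Odd k →
      Int.gcd k (2 * p * q * r) = 1 ∧
      1 ≤ distLambda ((k : ℝ) / p, (k : ℝ) / q, (k : ℝ) / r) := by
    intro k s hs hk hkodd
    constructor
    · rw [← Int.isCoprime_iff_gcd_eq_one]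
      obtain ⟨n, hn⟩ := hkodd
      have c2 : IsCoprime k 2 := ⟨1, -n, by linarith⟩
      have cp : IsCoprime k p := by
        rcases hs with h | h
        · exact ⟨2, -(q*r), by subst h; linarith [hk]⟩
        · exact ⟨-2, q*r, by subst h; linarith [hk]⟩
      have cq : IsCoprime k q := by
        rcases hs with h | h
        · exact ⟨2, -(p*r), by subst h; nlinarith [hk]⟩
        · exact ⟨-2, p*r, by subst h; nlinarith [hk]⟩
      have cr : IsCoprime k r := by
        rcases hs with h | h
        · exact ⟨2, -(p*q), by subst h; nlinarith [hk]⟩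
        · exact ⟨-2, p*q, by subst h; nlinarith [hk]⟩
      exact ((c2.mul_right cp).mul_right cq).mul_right cr
    · apply le_csInf
      · exact ⟨_, 0, 0, 0, by simp, rfl⟩
      · rintro d ⟨a, b, c, -, rfl⟩
        have hbp : (5/12 : ℝ) ≤ |(k:ℝ)/p - a| :=
          coord_bound k p (q*r) s a hs hp6 (hq.mul hr) (by linarith [hk])
        have hbq : (5/12 : ℝ) ≤ |(k:ℝ)/q - b| :=
          coord_bound k q (p*r) s b hs hq6 (hp.mul hr) (by nlinarith [hk])
        have hbr : (5/12 : ℝ) ≤ |(k:ℝ)/r - c| :=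
          coord_bound k r (p*q) s c hs hr6 (hp.mul hq) (by nlinarith [hk])
        simp only [l1dist]
        linarith
  rcases Int.even_or_odd m with he | ho
  · obtain ⟨n, hn⟩ := he
    exact ⟨m + 1, key (m+1) 1 (Or.inl rfl) (by linarith) ⟨n, by linarith⟩⟩
  · exact ⟨m, key m (-1) (Or.inr rfl) (by linarith) ho⟩
end

section
/- Let ε ∈ [0, 1/6] and let (x,y,z) ∈ ℝ³ satisfy dist((x,y,z), ℤ³) ≤ 1 + 3ε in the ℓ¹-metric, where dist is measured to the lattice ℤ³. Then (8 sin(πx) sin(πy) sin(πz))² ≤ 64 sin⁶(π/3 + πε). -/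
open Real Set

lemma nearest_int (x : ℝ) (a : ℤ) : |x - round x| ≤ |x - (a:ℝ)| := by
  rcases eq_or_ne a (round x) with h | h
  · rw [h]
  · have h1 : (1:ℝ) ≤ |(a:ℝ) - round x| := by
      have : (a:ℝ) - round x = ((a - round x : ℤ) : ℝ) := by push_cast; ring
      rw [this, ← Int.cast_abs]
      exact_mod_cast Int.one_le_abs (sub_ne_zero.mpr h)
    have h2 : |x - round x| ≤ 1/2 := abs_sub_round x
    have h3 : |(a:ℝ) - round x| ≤ |x - (a:ℝ)| + |x - round x| := by
      calc |(a:ℝ) - round x| ≤ |(a:ℝ) - x| + |x - round x| := abs_sub_le _ _ _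
      _ = |x - (a:ℝ)| + |x - round x| := by rw [abs_sub_comm]
    linarith

lemma sinsq_round (x : ℝ) : sin (π * x) ^ 2 = sin (π * |x - round x|) ^ 2 := by
  have h1 : sin (π * x) ^ 2 = sin (π * (x - round x)) ^ 2 := by
    have : π * x = π * (x - round x) + (round x) * π := by ring
    rw [this, sin_add_int_mul_pi]
    rcases Int.even_or_odd (round x) with he | ho
    · rw [he.neg_one_zpow]; ring
    · rw [Odd.neg_one_zpow ho]; ring
  rcases abs_cases (x - round x) with ⟨h, _⟩ | ⟨h, _⟩
  · rw [h1, h]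
  · rw [h1, h]; rw [mul_neg, sin_neg]; ring

lemma amgm3 (a b c : ℝ) (ha : 0 ≤ a) (hb : 0 ≤ b) (hc : 0 ≤ c) :
    a * b * c ≤ ((a + b + c) / 3) ^ 3 := by
  nlinarith [sq_nonneg (a-b), sq_nonneg (b-c), sq_nonneg (a-c),
    mul_nonneg ha (sq_nonneg (b-c)), mul_nonneg hb (sq_nonneg (a-c)),
    mul_nonneg hc (sq_nonneg (a-b)), mul_nonneg (mul_nonneg ha hb) hc,
    sq_nonneg (a+b+c)]

lemma jensen3 (a b c : ℝ) (ha : a ∈ Icc 0 π) (hb : b ∈ Icc 0 π) (hc : c ∈ Icc 0 π) :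
    sin a + sin b + sin c ≤ 3 * sin ((a + b + c) / 3) := by
  have hcc := strictConcaveOn_sin_Icc.concaveOn
  obtain ⟨ha0, ha1⟩ := ha; obtain ⟨hb0, hb1⟩ := hb; obtain ⟨hc0, hc1⟩ := hc
  have hm : (a + b) / 2 ∈ Icc 0 π := ⟨by positivity, by linarith⟩
  have h1 : (1/2 : ℝ) • sin a + (1/2 : ℝ) • sin b ≤ sin ((1/2 : ℝ) • a + (1/2 : ℝ) • b) :=
    hcc.2 ⟨ha0, ha1⟩ ⟨hb0, hb1⟩ (by norm_num) (by norm_num) (by norm_num)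
  have h2 : (2/3 : ℝ) • sin ((a+b)/2) + (1/3 : ℝ) • sin c
      ≤ sin ((2/3 : ℝ) • ((a+b)/2) + (1/3 : ℝ) • c) :=
    hcc.2 hm ⟨hc0, hc1⟩ (by norm_num) (by norm_num) (by norm_num)
  simp only [smul_eq_mul] at h1 h2
  have e1 : (1/2 : ℝ) * a + (1/2 : ℝ) * b = (a+b)/2 := by ring
  have e2 : (2/3 : ℝ) * ((a+b)/2) + (1/3 : ℝ) * c = (a+b+c)/3 := by ring
  rw [e1] at h1; rw [e2] at h2
  linarith

/-- ℓ¹-distance from a point of ℝ³ to the lattice ℤ³. -/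
noncomputable def distZ3 (v : ℝ × ℝ × ℝ) : ℝ :=
  sInf { d | ∃ a b c : ℤ,
    d = |v.1 - (a : ℝ)| + |v.2.1 - (b : ℝ)| + |v.2.2 - (c : ℝ)| }

set_option maxHeartbeats 1000000 in
theorem sin_product_bound (ε x y z : ℝ) (hε0 : 0 ≤ ε) (hε : ε ≤ 1/6)
    (hd : distZ3 (x, y, z) ≤ 1 + 3 * ε) :
    (8 * Real.sin (Real.pi * x) * Real.sin (Real.pi * y) * Real.sin (Real.pi * z)) ^ 2 ≤
      64 * Real.sin (Real.pi / 3 + Real.pi * ε) ^ 6 := by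
  set u := |x - round x| with hu
  set v := |y - round y| with hv
  set w := |z - round z| with hw
  have hlow : u + v + w ≤ distZ3 (x, y, z) := by
    apply le_csInf
    · exact ⟨|x - (0:ℤ)| + |y - (0:ℤ)| + |z - (0:ℤ)|, 0, 0, 0, rfl⟩
    · rintro d ⟨a, b, c, rfl⟩
      have h1 := nearest_int x a
      have h2 := nearest_int y b
      have h3 := nearest_int z c
      simp only []
      linarith
  have hsum : u + v + w ≤ 1 + 3 * ε := le_trans hlow hd
  have hu0 : 0 ≤ u := abs_nonneg _
  have hv0 : 0 ≤ v := abs_nonneg _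
  have hw0 : 0 ≤ w := abs_nonneg _
  have hu2 : u ≤ 1/2 := abs_sub_round x
  have hv2 : v ≤ 1/2 := abs_sub_round y
  have hw2 : w ≤ 1/2 := abs_sub_round z
  have hπ := Real.pi_pos
  have hmemu : π * u ∈ Icc 0 π := ⟨by positivity, by nlinarith⟩
  have hmemv : π * v ∈ Icc 0 π := ⟨by positivity, by nlinarith⟩
  have hmemw : π * w ∈ Icc 0 π := ⟨by positivity, by nlinarith⟩
  set A := sin (π * u) with hA
  set B := sin (π * v) with hB
  set C := sin (π * w) with hC
  have hA0 : 0 ≤ A := Real.sin_nonneg_of_mem_Icc hmemu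
  have hB0 : 0 ≤ B := Real.sin_nonneg_of_mem_Icc hmemv
  have hC0 : 0 ≤ C := Real.sin_nonneg_of_mem_Icc hmemw
  have hjen : A + B + C ≤ 3 * sin ((π * u + π * v + π * w) / 3) :=
    jensen3 _ _ _ hmemu hmemv hmemw
  set s := sin (π / 3 + π * ε) with hs
  have hmono : sin ((π * u + π * v + π * w) / 3) ≤ s := by
    have harg : (π * u + π * v + π * w) / 3 ≤ π / 3 + π * ε := by nlinarith
    have h1 : (π * u + π * v + π * w) / 3 ∈ Icc (-(π/2)) (π/2) := by
      constructor
      · have : (0:ℝ) ≤ (π * u + π * v + π * w) / 3 := by positivity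
        linarith
      · nlinarith
    have h2 : π / 3 + π * ε ∈ Icc (-(π/2)) (π/2) := by
      constructor
      · nlinarith
      · nlinarith
    exact Real.strictMonoOn_sin.monotoneOn h1 h2 harg
  have hsin3 : A + B + C ≤ 3 * s := by nlinarith [Real.sin_nonneg_of_mem_Icc hmemu]
  have hs0 : 0 ≤ s := by
    apply Real.sin_nonneg_of_nonneg_of_le_pi
    · positivity
    · nlinarith
  have hprod : A * B * C ≤ s ^ 3 := by
    calc A * B * C ≤ ((A + B + C) / 3) ^ 3 := amgm3 _ _ _ hA0 hB0 hC0
    _ ≤ s ^ 3 := by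
        apply pow_le_pow_left₀ (by linarith) (by linarith)
  have hx2 : Real.sin (Real.pi * x) ^ 2 = A ^ 2 := sinsq_round x
  have hy2 : Real.sin (Real.pi * y) ^ 2 = B ^ 2 := sinsq_round y
  have hz2 : Real.sin (Real.pi * z) ^ 2 = C ^ 2 := sinsq_round z
  have key : (8 * Real.sin (Real.pi * x) * Real.sin (Real.pi * y) * Real.sin (Real.pi * z)) ^ 2
      = 64 * (A * B * C) ^ 2 := by
    have : (8 * Real.sin (Real.pi * x) * Real.sin (Real.pi * y) * Real.sin (Real.pi * z)) ^ 2
        = 64 * (Real.sin (Real.pi * x) ^ 2 * (Real.sin (Real.pi * y) ^ 2 *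
          Real.sin (Real.pi * z) ^ 2)) := by ring
    rw [this, hx2, hy2, hz2]; ring
  rw [key]
  have habc : 0 ≤ A * B * C := by positivity
  have h2 : (A * B * C) ^ 2 ≤ (s ^ 3) ^ 2 := pow_le_pow_left₀ habc hprod 2
  nlinarith [h2]
end

section
/- For every positive integer p, setting v = (1/p, 1/(p+1), 1/(p(p+1))), the real number t defined by t = p(p+1)/3 + p/3 if p ≡ 0 mod 3, t = p(p+1)/3 if p ≡ 1 mod 3, and t = p(p+1)/3 - (p+1)/3 if p ≡ 2 mod 3, satisfies: the ℓ¹-distance from t·v to the lattice Λ = {(a,b,c) ∈ ℤ³ : a+b+c even} equals 4/3 - 2/(3(p+1)) if p ≡ 0 mod 3, equals 4/3 if p ≡ 1 mod 3, and equals 4/3 - 2/(3p) if p ≡ 2 mod 3. -/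
lemma abs_lb_even (x f : ℝ) (m a j : ℤ) (hx : x = (m : ℝ) + f) (h0 : 0 ≤ f) (h1 : f ≤ 1)
    (hj : a - m = j + j) : f ≤ |x - (a : ℝ)| := by
  have ha : (a : ℝ) = (m : ℝ) + 2 * (j : ℝ) := by
    have h : a = m + (j + j) := by omega
    rw [h]; push_cast; ring
  rw [hx, ha, show (m : ℝ) + f - ((m : ℝ) + 2 * (j : ℝ)) = f - 2 * j by ring]
  rcases le_or_gt j 0 with h | h
  · have hj' : (j : ℝ) ≤ 0 := by exact_mod_cast h
    rw [abs_of_nonneg (by linarith)]; linarith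
  · have hj' : (1 : ℝ) ≤ (j : ℝ) := by exact_mod_cast h
    rw [abs_of_nonpos (by linarith)]; linarith

lemma abs_lb_odd (x f : ℝ) (m a j : ℤ) (hx : x = (m : ℝ) + f) (h0 : 0 ≤ f) (h1 : f ≤ 1)
    (hj : a - m = 2 * j + 1) : 1 - f ≤ |x - (a : ℝ)| := by
  have ha : (a : ℝ) = (m : ℝ) + 2 * (j : ℝ) + 1 := by
    have h : a = m + (2 * j + 1) := by omega
    rw [h]; push_cast; ring
  rw [hx, ha, show (m : ℝ) + f - ((m : ℝ) + 2 * (j : ℝ) + 1) = f - 2 * j - 1 by ring]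
  rcases le_or_gt j 0 with h | h
  · have hj' : (j : ℝ) ≤ 0 := by exact_mod_cast h
    rcases lt_or_ge j 0 with h' | h'
    · have hj'' : (j : ℝ) ≤ -1 := by exact_mod_cast (by omega : j ≤ -1)
      rw [abs_of_nonneg (by linarith)]; linarith
    · have hj0 : j = 0 := le_antisymm h h'
      subst hj0
      simp only [Int.cast_zero]
      rw [abs_of_nonpos (by linarith)]; linarith
  · have hj' : (1 : ℝ) ≤ (j : ℝ) := by exact_mod_cast h
    rw [abs_of_nonpos (by linarith)]; linarith

lemma lb_main (x y z V : ℝ) (m1 m2 m3 : ℤ) (f1 f2 f3 : ℝ)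
    (hx : x = (m1 : ℝ) + f1) (hy : y = (m2 : ℝ) + f2) (hz : z = (m3 : ℝ) + f3)
    (h10 : 0 ≤ f1) (h11 : f1 ≤ 1) (h20 : 0 ≤ f2) (h21 : f2 ≤ 1)
    (h30 : 0 ≤ f3) (h31 : f3 ≤ 1)
    (hm : Even (m1 + m2 + m3))
    (c0 : V ≤ f1 + f2 + f3)
    (c1 : V ≤ 2 - f1 - f2 + f3)
    (c2 : V ≤ 2 - f1 + f2 - f3)
    (c3 : V ≤ 2 + f1 - f2 - f3) :
    ∀ a b c : ℤ, Even (a + b + c) → V ≤ l1dist (x, y, z) ((a : ℝ), (b : ℝ), (c : ℝ)) := by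
  intro a b c hev
  show V ≤ |x - (a : ℝ)| + |y - (b : ℝ)| + |z - (c : ℝ)|
  obtain ⟨r, hr⟩ := hev
  obtain ⟨s, hs⟩ := hm
  rcases Int.even_or_odd (a - m1) with ⟨j1, hj1⟩ | ⟨j1, hj1⟩ <;>
    rcases Int.even_or_odd (b - m2) with ⟨j2, hj2⟩ | ⟨j2, hj2⟩ <;>
      rcases Int.even_or_odd (c - m3) with ⟨j3, hj3⟩ | ⟨j3, hj3⟩
  · linarith [abs_lb_even x f1 m1 a j1 hx h10 h11 hj1,
      abs_lb_even y f2 m2 b j2 hy h20 h21 hj2, abs_lb_even z f3 m3 c j3 hz h30 h31 hj3]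
  · exfalso; omega
  · exfalso; omega
  · linarith [abs_lb_even x f1 m1 a j1 hx h10 h11 hj1,
      abs_lb_odd y f2 m2 b j2 hy h20 h21 hj2, abs_lb_odd z f3 m3 c j3 hz h30 h31 hj3]
  · exfalso; omega
  · linarith [abs_lb_odd x f1 m1 a j1 hx h10 h11 hj1,
      abs_lb_even y f2 m2 b j2 hy h20 h21 hj2, abs_lb_odd z f3 m3 c j3 hz h30 h31 hj3]
  · linarith [abs_lb_odd x f1 m1 a j1 hx h10 h11 hj1,
      abs_lb_odd y f2 m2 b j2 hy h20 h21 hj2, abs_lb_even z f3 m3 c j3 hz h30 h31 hj3]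
  · exfalso; omega

lemma distLambda_eq (x y z V : ℝ) (a b c : ℤ) (hev : Even (a + b + c))
    (hV : V = l1dist (x, y, z) ((a : ℝ), (b : ℝ), (c : ℝ)))
    (hlb : ∀ a b c : ℤ, Even (a + b + c) → V ≤ l1dist (x, y, z) ((a : ℝ), (b : ℝ), (c : ℝ))) :
    distLambda (x, y, z) = V := by
  unfold distLambda
  apply le_antisymm
  · apply csInf_le
    · refine ⟨V, ?_⟩
      rintro d ⟨a', b', c', h', rfl⟩
      exact hlb a' b' c' h'
    · exact ⟨a, b, c, hev, hV⟩
  · refine le_csInf ⟨V, ?_⟩ ?_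
    · exact ⟨a, b, c, hev, hV⟩
    · rintro d ⟨a', b', c', h', rfl⟩
      exact hlb a' b' c' h'

lemma case0 (k : ℤ) (hk : 1 ≤ k) :
    distLambda ((k : ℝ) + 2/3, (k : ℝ) + (k : ℝ)/(3*(k : ℝ)+1),
        (3*(k : ℝ)+2)/(3*(3*(k : ℝ)+1))) =
      4/3 - 2/(3*(3*(k : ℝ)+1)) := by
  have hK : (1 : ℝ) ≤ (k : ℝ) := by exact_mod_cast hk
  have hd : (0 : ℝ) < 3*(k : ℝ)+1 := by linarith
  have hd' : (3*(k : ℝ)+1) ≠ 0 := ne_of_gt hd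
  apply distLambda_eq _ _ _ _ (k+1) k 1 ⟨k+1, by ring⟩
  · show _ = |(k : ℝ) + 2/3 - ((k+1 : ℤ) : ℝ)| + |(k : ℝ) + (k : ℝ)/(3*(k : ℝ)+1) - (k : ℝ)|
      + |(3*(k : ℝ)+2)/(3*(3*(k : ℝ)+1)) - ((1 : ℤ) : ℝ)|
    push_cast
    have hz1 : (3*(k : ℝ)+2)/(3*(3*(k : ℝ)+1)) ≤ 1 := by
      rw [div_le_one (by linarith)]; linarith
    have hy0 : (0 : ℝ) ≤ (k : ℝ)/(3*(k : ℝ)+1) := div_nonneg (by linarith) (by linarith)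
    rw [abs_of_nonpos (by linarith), abs_of_nonneg (by linarith),
      abs_of_nonpos (by linarith)]
    field_simp
    ring
  · apply lb_main _ _ _ _ k k 0 (2/3) ((k : ℝ)/(3*(k : ℝ)+1)) ((3*(k : ℝ)+2)/(3*(3*(k : ℝ)+1)))
      rfl rfl (by push_cast; ring) (by norm_num) (by norm_num)
      (div_nonneg (by linarith) (by linarith)) (by rw [div_le_one hd]; linarith)
      (div_nonneg (by linarith) (by linarith)) (by rw [div_le_one (by linarith)]; linarith)
      ⟨k, by ring⟩
    · have h : 2/3 + (k : ℝ)/(3*(k : ℝ)+1) + (3*(k : ℝ)+2)/(3*(3*(k : ℝ)+1))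
          - (4/3 - 2/(3*(3*(k : ℝ)+1))) = 2/(3*(3*(k : ℝ)+1)) := by
        field_simp; ring
      have h2 : (0 : ℝ) ≤ 2/(3*(3*(k : ℝ)+1)) := by positivity
      linarith
    · have h : 2 - 2/3 - (k : ℝ)/(3*(k : ℝ)+1) + (3*(k : ℝ)+2)/(3*(3*(k : ℝ)+1))
          - (4/3 - 2/(3*(3*(k : ℝ)+1))) = 4/(3*(3*(k : ℝ)+1)) := by
        field_simp; ring
      have h2 : (0 : ℝ) ≤ 4/(3*(3*(k : ℝ)+1)) := by positivity
      linarith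
    · have h : 2 - 2/3 + (k : ℝ)/(3*(k : ℝ)+1) - (3*(k : ℝ)+2)/(3*(3*(k : ℝ)+1))
          - (4/3 - 2/(3*(3*(k : ℝ)+1))) = 0 := by
        field_simp; ring
      linarith
    · have h : 2 + 2/3 - (k : ℝ)/(3*(k : ℝ)+1) - (3*(k : ℝ)+2)/(3*(3*(k : ℝ)+1))
          - (4/3 - 2/(3*(3*(k : ℝ)+1))) = 2/3 + 2/(3*(3*(k : ℝ)+1)) := by
        field_simp; ring
      have h2 : (0 : ℝ) ≤ 2/(3*(3*(k : ℝ)+1)) := by positivity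
      linarith

lemma case1 (k : ℤ) (hk : 0 ≤ k) :
    distLambda ((k : ℝ) + 2/3, (k : ℝ) + 1/3, 1/3) = 4/3 := by
  apply distLambda_eq _ _ _ _ (k+1) k 1 ⟨k+1, by ring⟩
  · show _ = |(k : ℝ) + 2/3 - ((k+1 : ℤ) : ℝ)| + |(k : ℝ) + 1/3 - (k : ℝ)|
      + |(1 : ℝ)/3 - ((1 : ℤ) : ℝ)|
    push_cast
    rw [abs_of_nonpos (by linarith), abs_of_nonneg (by norm_num),
      abs_of_nonpos (by norm_num)]
    ring
  · apply lb_main _ _ _ _ k k 0 (2/3) (1/3) (1/3)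
      rfl rfl (by push_cast; ring) (by norm_num) (by norm_num)
      (by norm_num) (by norm_num) (by norm_num) (by norm_num)
      ⟨k, by ring⟩ (by norm_num) (by norm_num) (by norm_num) (by norm_num)

lemma case2 (k : ℤ) (hk : 0 ≤ k) :
    distLambda ((k : ℝ) + (2*(k : ℝ)+1)/(3*(k : ℝ)+2), (k : ℝ) + 1/3,
        (3*(k : ℝ)+1)/(3*(3*(k : ℝ)+2))) =
      4/3 - 2/(3*(3*(k : ℝ)+2)) := by
  have hK : (0 : ℝ) ≤ (k : ℝ) := by exact_mod_cast hk
  have hd : (0 : ℝ) < 3*(k : ℝ)+2 := by linarith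
  have hd' : (3*(k : ℝ)+2) ≠ 0 := ne_of_gt hd
  apply distLambda_eq _ _ _ _ k k 0 ⟨k, by ring⟩
  · show _ = |(k : ℝ) + (2*(k : ℝ)+1)/(3*(k : ℝ)+2) - (k : ℝ)| + |(k : ℝ) + 1/3 - (k : ℝ)|
      + |(3*(k : ℝ)+1)/(3*(3*(k : ℝ)+2)) - ((0 : ℤ) : ℝ)|
    push_cast
    have h1 : (0 : ℝ) ≤ (2*(k : ℝ)+1)/(3*(k : ℝ)+2) := div_nonneg (by linarith) (by linarith)
    have h2 : (0 : ℝ) ≤ (3*(k : ℝ)+1)/(3*(3*(k : ℝ)+2)) := div_nonneg (by linarith) (by linarith)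
    rw [abs_of_nonneg (by linarith), abs_of_nonneg (by norm_num),
      abs_of_nonneg (by linarith)]
    field_simp
    ring
  · apply lb_main _ _ _ _ k k 0 ((2*(k : ℝ)+1)/(3*(k : ℝ)+2)) (1/3)
      ((3*(k : ℝ)+1)/(3*(3*(k : ℝ)+2)))
      rfl rfl (by push_cast; ring)
      (div_nonneg (by linarith) (by linarith)) (by rw [div_le_one hd]; linarith)
      (by norm_num) (by norm_num)
      (div_nonneg (by linarith) (by linarith)) (by rw [div_le_one (by linarith)]; linarith)
      ⟨k, by ring⟩
    · have h : (2*(k : ℝ)+1)/(3*(k : ℝ)+2) + 1/3 + (3*(k : ℝ)+1)/(3*(3*(k : ℝ)+2))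
          - (4/3 - 2/(3*(3*(k : ℝ)+2))) = 0 := by
        field_simp; ring
      linarith
    · have h : 2 - (2*(k : ℝ)+1)/(3*(k : ℝ)+2) - 1/3 + (3*(k : ℝ)+1)/(3*(3*(k : ℝ)+2))
          - (4/3 - 2/(3*(3*(k : ℝ)+2))) = 2/(3*(3*(k : ℝ)+2)) := by
        field_simp; ring
      have h2 : (0 : ℝ) ≤ 2/(3*(3*(k : ℝ)+2)) := by positivity
      linarith
    · have h : 2 - (2*(k : ℝ)+1)/(3*(k : ℝ)+2) + 1/3 - (3*(k : ℝ)+1)/(3*(3*(k : ℝ)+2))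
          - (4/3 - 2/(3*(3*(k : ℝ)+2))) = 4/(3*(3*(k : ℝ)+2)) := by
        field_simp; ring
      have h2 : (0 : ℝ) ≤ 4/(3*(3*(k : ℝ)+2)) := by positivity
      linarith
    · have h : 2 + (2*(k : ℝ)+1)/(3*(k : ℝ)+2) - 1/3 - (3*(k : ℝ)+1)/(3*(3*(k : ℝ)+2))
          - (4/3 - 2/(3*(3*(k : ℝ)+2))) = 2/3 + 2/(3*(3*(k : ℝ)+2)) := by
        field_simp; ring
      have h2 : (0 : ℝ) ≤ 2/(3*(3*(k : ℝ)+2)) := by positivity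
      linarith

theorem hyperplane_family_distance (p : ℕ) (hp : 0 < p) (t : ℝ)
    (ht : t = (p : ℝ) * ((p : ℝ) + 1) / 3 +
      (if p % 3 = 0 then (p : ℝ) / 3
       else if p % 3 = 1 then 0
       else -(((p : ℝ) + 1) / 3))) :
    distLambda (t / p, t / ((p : ℝ) + 1), t / ((p : ℝ) * ((p : ℝ) + 1))) =
      4/3 - (if p % 3 = 0 then 2 / (3 * ((p : ℝ) + 1))
             else if p % 3 = 1 then 0
             else 2 / (3 * (p : ℝ))) := by
  have h3 : p % 3 = 0 ∨ p % 3 = 1 ∨ p % 3 = 2 := by omega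
  rcases h3 with h | h | h
  · rw [if_pos h] at ht ⊢
    obtain ⟨k, hk⟩ : ∃ k : ℕ, p = 3 * k := ⟨p / 3, by omega⟩
    have hk1 : 1 ≤ k := by omega
    have hP : (p : ℝ) = 3 * (k : ℝ) := by rw [hk]; push_cast; ring
    have hK : (1 : ℝ) ≤ (k : ℝ) := by exact_mod_cast hk1
    have hk0 : (k : ℝ) ≠ 0 := by linarith
    have hd : (3 * (k : ℝ) + 1) ≠ 0 := by linarith
    have hx : t / (p : ℝ) = (k : ℝ) + 2/3 := by
      rw [ht, hP]; field_simp; ring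
    have hy : t / ((p : ℝ) + 1) = (k : ℝ) + (k : ℝ)/(3*(k : ℝ)+1) := by
      rw [ht, hP]; field_simp
    have hz : t / ((p : ℝ) * ((p : ℝ) + 1)) = (3*(k : ℝ)+2)/(3*(3*(k : ℝ)+1)) := by
      rw [ht, hP]; field_simp; ring
    rw [hx, hy, hz, show (p : ℝ) + 1 = 3*(k : ℝ)+1 from by rw [hP]]
    have := case0 (k : ℤ) (by exact_mod_cast hk1)
    push_cast at this
    exact this
  · rw [if_neg (by omega), if_pos h] at ht ⊢
    obtain ⟨k, hk⟩ : ∃ k : ℕ, p = 3 * k + 1 := ⟨p / 3, by omega⟩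
    have hP : (p : ℝ) = 3 * (k : ℝ) + 1 := by rw [hk]; push_cast; ring
    have hK : (0 : ℝ) ≤ (k : ℝ) := by positivity
    have hp0 : (3 * (k : ℝ) + 1) ≠ 0 := by linarith
    have hp1 : (3 * (k : ℝ) + 2) ≠ 0 := by linarith
    have hx : t / (p : ℝ) = (k : ℝ) + 2/3 := by
      rw [ht, hP]; field_simp; ring
    have hy : t / ((p : ℝ) + 1) = (k : ℝ) + 1/3 := by
      rw [ht, hP]; field_simp; ring
    have hz : t / ((p : ℝ) * ((p : ℝ) + 1)) = 1/3 := by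
      rw [ht, hP]; field_simp; ring
    rw [hx, hy, hz]
    have := case1 (k : ℤ) (by positivity)
    push_cast at this
    rw [this]
    norm_num
  · rw [if_neg (by omega), if_neg (by omega)] at ht ⊢
    obtain ⟨k, hk⟩ : ∃ k : ℕ, p = 3 * k + 2 := ⟨p / 3, by omega⟩
    have hP : (p : ℝ) = 3 * (k : ℝ) + 2 := by rw [hk]; push_cast; ring
    have hK : (0 : ℝ) ≤ (k : ℝ) := by positivity
    have hp0 : (3 * (k : ℝ) + 2) ≠ 0 := by linarith
    have hp1 : (3 * (k : ℝ) + 3) ≠ 0 := by linarith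
    have hx : t / (p : ℝ) = (k : ℝ) + (2*(k : ℝ)+1)/(3*(k : ℝ)+2) := by
      rw [ht, hP]; field_simp; ring
    have hy : t / ((p : ℝ) + 1) = (k : ℝ) + 1/3 := by
      rw [ht, hP]; field_simp; ring
    have hz : t / ((p : ℝ) * ((p : ℝ) + 1)) = (3*(k : ℝ)+1)/(3*(3*(k : ℝ)+2)) := by
      rw [ht, hP]; field_simp; ring
    rw [hx, hy, hz, show (p : ℝ) = 3*(k : ℝ)+2 from hP]
    have := case2 (k : ℤ) (by positivity)
    push_cast at this
    exact this
end

section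
/- For every pair of coprime positive integers (a, b), there exists a real number t such that the point (t/a mod 2, t/b mod 2) lies in the region Ω ⊂ [0,2]², where Ω is the union of the four rotations by multiples of π/2 about the point (1,1) of the segment {(x, y) : x + y = 1, 1/3 ≤ x ≤ 2/3}. -/
/-- The region Ω ⊂ [0,2]²: four rotations by multiples of π/2 about (1,1) of the
segment {x + y = 1, 1/3 ≤ x ≤ 2/3}. -/
def inOmega (x y : ℝ) : Prop :=
  (x + y = 1 ∧ 1/3 ≤ x ∧ x ≤ 2/3) ∨
  (x + y = 3 ∧ 4/3 ≤ x ∧ x ≤ 5/3) ∨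
  (y - x = 1 ∧ 1/3 ≤ x ∧ x ≤ 2/3) ∨
  (x - y = 1 ∧ 1/3 ≤ y ∧ y ≤ 2/3)

theorem line_hits_Omega (a b : ℕ) (ha : 0 < a) (hb : 0 < b) (hab : Nat.Coprime a b) :
    ∃ t x y : ℝ, inOmega x y ∧
      ∃ m n : ℤ, t / a = x + 2 * m ∧ t / b = y + 2 * n := by
  by_cases hs : a + b ≤ 5
  · have ha4 : a ≤ 4 := by omega
    have hb4 : b ≤ 4 := by omega
    have ha1 : 1 ≤ a := ha
    have hb1 : 1 ≤ b := hb
    interval_cases a <;> interval_cases b <;>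
      first
        | omega
        | exact absurd hab (by decide)
        | (refine ⟨1/2, 1/2, 1/2, ?_, 0, 0, ?_, ?_⟩ <;> norm_num [inOmega]; done)
        | (refine ⟨2/3, 2/3, 1/3, ?_, 0, 0, ?_, ?_⟩ <;> norm_num [inOmega]; done)
        | (refine ⟨2/3, 1/3, 2/3, ?_, 0, 0, ?_, ?_⟩ <;> norm_num [inOmega]; done)
        | (refine ⟨3/2, 3/2, 1/2, ?_, 0, 0, ?_, ?_⟩ <;> norm_num [inOmega]; done)
        | (refine ⟨3/2, 1/2, 3/2, ?_, 0, 0, ?_, ?_⟩ <;> norm_num [inOmega]; done)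
        | (refine ⟨12/5, 2/5, 3/5, ?_, 1, 0, ?_, ?_⟩ <;> norm_num [inOmega]; done)
        | (refine ⟨12/5, 3/5, 2/5, ?_, 0, 1, ?_, ?_⟩ <;> norm_num [inOmega]; done)
        | (refine ⟨6/5, 3/5, 2/5, ?_, 0, 0, ?_, ?_⟩ <;> norm_num [inOmega]; done)
        | (refine ⟨6/5, 2/5, 3/5, ?_, 0, 0, ?_, ?_⟩ <;> norm_num [inOmega]; done)
  · push_neg at hs
    have hs6 : (6:ℝ) ≤ (a:ℝ) + b := by
      have : 6 ≤ a + b := by omega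
      exact_mod_cast this
    have ha' : (a:ℝ) ≠ 0 := by positivity
    have hb' : (b:ℝ) ≠ 0 := by positivity
    have hspos : (0:ℝ) < (a:ℝ) + b := by positivity
    set s : ℝ := (a:ℝ) + b with hsdef
    set k : ℤ := ⌈(s - 3*b)/6⌉ with hkdef
    -- Bezout
    obtain ⟨u, v, huv⟩ : ∃ u v : ℤ, (a:ℤ)*u + (b:ℤ)*v = 1 := by
      refine ⟨Nat.gcdA a b, Nat.gcdB a b, ?_⟩
      have := Nat.gcd_eq_gcd_ab a b
      rw [hab] at this
      omega
    set x : ℝ := ((b:ℝ) + 2*k)/s with hxdef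
    have hk1 : (s - 3*b)/6 ≤ (k:ℝ) := Int.le_ceil _
    have hk2 : (k:ℝ) < (s - 3*b)/6 + 1 := Int.ceil_lt_add_one _
    have hx1 : 1/3 ≤ x := by
      rw [hxdef, le_div_iff₀ hspos]
      linarith
    have hx2 : x ≤ 2/3 := by
      rw [hxdef, div_le_iff₀ hspos]
      linarith
    have hxs : s * x = (b:ℝ) + 2*k := by
      rw [hxdef, mul_div_cancel₀ _ (ne_of_gt hspos)]
    have hmn : (b:ℝ)*(k*v) - (a:ℝ)*(-(k*u)) = k := by
      have huv' : (a:ℝ)*u + (b:ℝ)*v = 1 := by exact_mod_cast huv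
      push_cast
      linear_combination (k:ℝ) * huv'
    refine ⟨(a:ℝ) * (x + 2*(-(k*u) : ℤ)), x, 1 - x,
      Or.inl ⟨by ring, hx1, hx2⟩, -(k*u), k*v, ?_, ?_⟩
    · exact mul_div_cancel_left₀ _ ha'
    · rw [div_eq_iff hb']
      push_cast
      push_cast [hsdef] at hxs
      linear_combination hxs - 2 * hmn
end

section
/- Let x ∈ [1/6, 1/2] and suppose (y, z) ∈ [0,1]² satisfies 1 + 1/6 - x ≤ y + z ≤ 1 - 1/6 + x and -1 + 1/6 + x ≤ z - y ≤ 1 - 1/6 - x. Then the ℓ¹-distance from (x, y, z) to the lattice Λ = {(a,b,c) ∈ ℤ³ : a+b+c even} is at least 1 + 1/6. -/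
lemma key_bound (x y z : ℝ)
    (hx : x ∈ Set.Icc (1/6 : ℝ) (1/2))
    (hy : y ∈ Set.Icc (0 : ℝ) 1) (hz : z ∈ Set.Icc (0 : ℝ) 1)
    (h1 : 1 + 1/6 - x ≤ y + z) (h2 : y + z ≤ 1 - 1/6 + x)
    (h3 : -1 + 1/6 + x ≤ z - y) (h4 : z - y ≤ 1 - 1/6 - x)
    (a b c : ℤ) (hpar : Even (a + b + c)) :
    1 + 1/6 ≤ |x - a| + |y - b| + |z - c| := by
  obtain ⟨hx1, hx2⟩ := hx
  obtain ⟨hy1, hy2⟩ := hy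
  obtain ⟨hz1, hz2⟩ := hz
  obtain ⟨k, hk⟩ := hpar
  have ha1 : x - a ≤ |x - a| := le_abs_self _
  have ha2 : (a : ℝ) - x ≤ |x - a| := by rw [abs_sub_comm]; exact le_abs_self _
  have hb1 : y - b ≤ |y - b| := le_abs_self _
  have hb2 : (b : ℝ) - y ≤ |y - b| := by rw [abs_sub_comm]; exact le_abs_self _
  have hc1 : z - c ≤ |z - c| := le_abs_self _
  have hc2 : (c : ℝ) - z ≤ |z - c| := by rw [abs_sub_comm]; exact le_abs_self _
  rcases le_or_gt a 0 with ha | ha <;> rcases le_or_gt b 0 with hb | hb <;>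
    rcases le_or_gt c 0 with hc | hc
  · -- a ≤ 0, b ≤ 0, c ≤ 0
    have : (a : ℝ) ≤ 0 := by exact_mod_cast ha
    have : (b : ℝ) ≤ 0 := by exact_mod_cast hb
    have : (c : ℝ) ≤ 0 := by exact_mod_cast hc
    linarith
  · -- a ≤ 0, b ≤ 0, 1 ≤ c : need parity
    have hd : a + b ≤ -1 ∨ 2 ≤ c := by omega
    have hca : (1 : ℝ) ≤ c := by exact_mod_cast hc
    rcases hd with hd | hd
    · have : (a : ℝ) + b ≤ -1 := by exact_mod_cast hd
      linarith
    · have : (2 : ℝ) ≤ c := by exact_mod_cast hd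
      have : (a : ℝ) ≤ 0 := by exact_mod_cast ha
      have : (b : ℝ) ≤ 0 := by exact_mod_cast hb
      linarith
  · -- a ≤ 0, 1 ≤ b, c ≤ 0 : need parity
    have hd : a + c ≤ -1 ∨ 2 ≤ b := by omega
    have hba : (1 : ℝ) ≤ b := by exact_mod_cast hb
    rcases hd with hd | hd
    · have : (a : ℝ) + c ≤ -1 := by exact_mod_cast hd
      linarith
    · have : (2 : ℝ) ≤ b := by exact_mod_cast hd
      have : (a : ℝ) ≤ 0 := by exact_mod_cast ha
      have : (c : ℝ) ≤ 0 := by exact_mod_cast hc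
      linarith
  · -- a ≤ 0, 1 ≤ b, 1 ≤ c
    have : (a : ℝ) ≤ 0 := by exact_mod_cast ha
    have : (1 : ℝ) ≤ b := by exact_mod_cast hb
    have : (1 : ℝ) ≤ c := by exact_mod_cast hc
    linarith
  · -- 1 ≤ a, b ≤ 0, c ≤ 0
    have : (1 : ℝ) ≤ a := by exact_mod_cast ha
    have : (b : ℝ) ≤ 0 := by exact_mod_cast hb
    have : (c : ℝ) ≤ 0 := by exact_mod_cast hc
    linarith
  · -- 1 ≤ a, b ≤ 0, 1 ≤ c
    have : (1 : ℝ) ≤ a := by exact_mod_cast ha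
    have : (b : ℝ) ≤ 0 := by exact_mod_cast hb
    have : (1 : ℝ) ≤ c := by exact_mod_cast hc
    linarith
  · -- 1 ≤ a, 1 ≤ b, c ≤ 0
    have : (1 : ℝ) ≤ a := by exact_mod_cast ha
    have : (1 : ℝ) ≤ b := by exact_mod_cast hb
    have : (c : ℝ) ≤ 0 := by exact_mod_cast hc
    linarith
  · -- 1 ≤ a, 1 ≤ b, 1 ≤ c
    have : (1 : ℝ) ≤ a := by exact_mod_cast ha
    have : (1 : ℝ) ≤ b := by exact_mod_cast hb
    have : (1 : ℝ) ≤ c := by exact_mod_cast hc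
    linarith

theorem omega_region_distance (x y z : ℝ)
    (hx : x ∈ Set.Icc (1/6 : ℝ) (1/2))
    (hy : y ∈ Set.Icc (0 : ℝ) 1) (hz : z ∈ Set.Icc (0 : ℝ) 1)
    (h1 : 1 + 1/6 - x ≤ y + z) (h2 : y + z ≤ 1 - 1/6 + x)
    (h3 : -1 + 1/6 + x ≤ z - y) (h4 : z - y ≤ 1 - 1/6 - x) :
    1 + 1/6 ≤ distLambda (x, y, z) := by
  unfold distLambda
  apply le_csInf
  · exact ⟨l1dist (x, y, z) ((0 : ℤ), ((0 : ℤ) : ℝ), ((0 : ℤ) : ℝ)), 0, 0, 0, by simp, rfl⟩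
  · rintro d ⟨a, b, c, hpar, rfl⟩
    simpa [l1dist] using key_bound x y z hx hy hz h1 h2 h3 h4 a b c hpar
end

section
/- Let (a, b, c) be a triple of integers, not all zero, with gcd(a,b,c) = 1 and c ≥ max(|a|, |b|), c > 0. Let π: (ℝ/ℤ)² → ℝ³/ℤ³ be (s,t) ↦ (cs, ct, -as-bt), and let L be the line {(uz, vz) : z ∈ ℝ} in (ℝ/ℤ)² with gcd(u,v)=1 and h = max(|u|,|v|). Then for any point P in the image of π, there exists a point Q on π(L) with ℓ¹-distance |P - Q| ≤ (max(a+c, b+c))/(2h), where distances in ℝ³/ℤ³ are measured as infima of ℓ¹-distances of lifts. -/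
lemma key_aux (u v : ℤ) (hu : u ≠ 0) (hg : Int.gcd u v = 1) (s t : ℝ) :
    ∃ z : ℝ, ∃ k m : ℤ, s - (u : ℝ) * z = -(k : ℝ) ∧
      |t - (v : ℝ) * z - (m : ℝ)| ≤ 1 / (2 * |(u : ℝ)|) := by
  set x : ℝ := (u : ℝ) * t - (v : ℝ) * s with hx
  set n : ℤ := round x with hn
  obtain ⟨A, B, hAB⟩ : ∃ A B : ℤ, u * A + v * B = 1 := by
    refine ⟨Int.gcdA u v, Int.gcdB u v, ?_⟩
    have := Int.gcd_eq_gcd_ab u v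
    rw [hg] at this
    exact_mod_cast this.symm
  have hune : (u : ℝ) ≠ 0 := Int.cast_ne_zero.mpr hu
  have hABr : (u : ℝ) * (A : ℝ) + (v : ℝ) * (B : ℝ) = 1 := by exact_mod_cast hAB
  refine ⟨(s + ((n * B : ℤ) : ℝ)) / (u : ℝ), n * B, n * A, ?_, ?_⟩
  · field_simp; ring
  · have h1 : t - (v : ℝ) * ((s + ((n * B : ℤ) : ℝ)) / (u : ℝ)) - ((n * A : ℤ) : ℝ)
        = (x - (n : ℝ)) / (u : ℝ) := by
      field_simp
      push_cast
      linear_combination (-(n : ℝ)) * hABr - hx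
    rw [h1, abs_div]
    have h2 : |x - (n : ℝ)| ≤ 1 / 2 := by
      have := abs_sub_round x
      simpa [hn] using this
    have h3 : (0 : ℝ) < |(u : ℝ)| := abs_pos.mpr hune
    rw [div_le_div_iff₀ h3 (by positivity)]
    nlinarith [h2, h3]

theorem line_close_to_point_on_hyperplane
    (a b c : ℤ) (ha : 0 ≤ a) (hb : 0 ≤ b) (hc : 0 < c)
    (hmax : max |a| |b| ≤ c)
    (hgcd : Int.gcd (Int.gcd a b) c = 1)
    (u v : ℤ) (huv : Int.gcd u v = 1)
    (h : ℤ) (hh : h = max |u| |v|)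
    (s t : ℝ) :
    ∃ z : ℝ, ∃ m₁ m₂ m₃ : ℤ,
      |((c : ℝ) * s - (c : ℝ) * ((u : ℝ) * z)) + m₁| +
      |((c : ℝ) * t - (c : ℝ) * ((v : ℝ) * z)) + m₂| +
      |((-(a : ℝ) * s - (b : ℝ) * t) - (-(a : ℝ) * ((u : ℝ) * z) - (b : ℝ) * ((v : ℝ) * z))) + m₃|
        ≤ (max (a + c) (b + c) : ℝ) / (2 * (h : ℝ)) := by
  have har : (0:ℝ) ≤ (a:ℝ) := by exact_mod_cast ha
  have hbr : (0:ℝ) ≤ (b:ℝ) := by exact_mod_cast hb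
  have hcr : (0:ℝ) < (c:ℝ) := by exact_mod_cast hc
  by_cases hcase : |v| ≤ |u|
  · -- h = |u|, u ≠ 0
    have hu : u ≠ 0 := by
      rintro rfl
      simp at hcase
      subst hcase
      simp [Int.gcd] at huv
    have hhu : h = |u| := by rw [hh, max_eq_left hcase]
    have hhr : (h : ℝ) = |(u : ℝ)| := by rw [hhu]; push_cast; rfl
    have hhpos : (0:ℝ) < (h:ℝ) := by rw [hhr]; exact abs_pos.mpr (Int.cast_ne_zero.mpr hu)
    obtain ⟨z, k, m, hk, hm⟩ := key_aux u v hu huv s t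
    refine ⟨z, c * k, -(c * m), b * m - a * k, ?_⟩
    have e1 : ((c : ℝ) * s - (c : ℝ) * ((u : ℝ) * z)) + ((c * k : ℤ) : ℝ) = 0 := by
      push_cast; linear_combination (c : ℝ) * hk
    have e2 : ((c : ℝ) * t - (c : ℝ) * ((v : ℝ) * z)) + ((-(c * m) : ℤ) : ℝ)
        = (c : ℝ) * (t - (v : ℝ) * z - (m : ℝ)) := by push_cast; ring
    have e3 : ((-(a : ℝ) * s - (b : ℝ) * t) - (-(a : ℝ) * ((u : ℝ) * z) - (b : ℝ) * ((v : ℝ) * z)))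
        + ((b * m - a * k : ℤ) : ℝ) = -(b : ℝ) * (t - (v : ℝ) * z - (m : ℝ)) := by
      push_cast; linear_combination (-(a : ℝ)) * hk
    rw [e1, e2, e3, abs_zero, abs_mul, abs_mul, abs_neg, abs_of_pos hcr, abs_of_nonneg hbr]
    rw [hhr] at hhpos ⊢
    have hmax2 : ((b : ℝ) + c) ≤ max ((a : ℝ) + c) ((b : ℝ) + c) := le_max_right _ _
    have h2pos : (0:ℝ) < 2 * |(u:ℝ)| := by positivity
    rw [le_div_iff₀ h2pos] at hm
    rw [le_div_iff₀ h2pos]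
    nlinarith [hm, abs_nonneg (t - (v : ℝ) * z - (m : ℝ)), hmax2, hhpos]
  · -- |u| < |v|, h = |v|, v ≠ 0
    push_neg at hcase
    have hv : v ≠ 0 := by
      rintro rfl
      simp at hcase
      exact absurd hcase (abs_nonneg u).not_gt
    have hhu : h = |v| := by rw [hh, max_eq_right hcase.le]
    have hhr : (h : ℝ) = |(v : ℝ)| := by rw [hhu]; push_cast; rfl
    have hhpos : (0:ℝ) < (h:ℝ) := by rw [hhr]; exact abs_pos.mpr (Int.cast_ne_zero.mpr hv)
    obtain ⟨z, k, m, hk, hm⟩ := key_aux v u hv (by rwa [Int.gcd_comm]) t s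
    refine ⟨z, -(c * m), c * k, a * m - b * k, ?_⟩
    have e1 : ((c : ℝ) * s - (c : ℝ) * ((u : ℝ) * z)) + ((-(c * m) : ℤ) : ℝ)
        = (c : ℝ) * (s - (u : ℝ) * z - (m : ℝ)) := by push_cast; ring
    have e2 : ((c : ℝ) * t - (c : ℝ) * ((v : ℝ) * z)) + ((c * k : ℤ) : ℝ) = 0 := by
      push_cast; linear_combination (c : ℝ) * hk
    have e3 : ((-(a : ℝ) * s - (b : ℝ) * t) - (-(a : ℝ) * ((u : ℝ) * z) - (b : ℝ) * ((v : ℝ) * z)))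
        + ((a * m - b * k : ℤ) : ℝ) = -(a : ℝ) * (s - (u : ℝ) * z - (m : ℝ)) := by
      push_cast; linear_combination (-(b : ℝ)) * hk
    rw [e1, e2, e3, abs_zero, abs_mul, abs_mul, abs_neg, abs_of_pos hcr, abs_of_nonneg har]
    rw [hhr] at hhpos ⊢
    have hmax2 : ((a : ℝ) + c) ≤ max ((a : ℝ) + c) ((b : ℝ) + c) := le_max_left _ _
    have h2pos : (0:ℝ) < 2 * |(v:ℝ)| := by positivity
    rw [le_div_iff₀ h2pos] at hm
    rw [le_div_iff₀ h2pos]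
    nlinarith [hm, abs_nonneg (s - (u : ℝ) * z - (m : ℝ)), hmax2, hhpos]
end
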